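/- Full Proposition 1: with Y_i, clusters g(·), t(·), time aggregates y_t := Σ_{i: t(i)=t} Y_i, bandwidth M ≤ T−1, and kernel weights ω(m, M) ≥ 0, the matrix V_con − V_adj is positive semidefinite, where V_con := Σ_i Σ_{j: g(j)=g(i)} E[Y_i Y_j′] + Σ_i Σ_{j: t(j)=t(i)} E[Y_i Y_j′] + Σ_{m=1}^M ω(m,M)(Σ_{t=1}^{T−m} E[y_t y_{t+m}′] + Σ_{t=1}^{T−m} E[y_{t+m} y_t′] + 2 Σ_{t=1}^T E[y_t y_t′]) and V_adj := Σ_i Σ_{j: g(j)=g(i)} Cov(Y_i,Y_j) + Σ_i Σ_{j: t(j)=t(i)} Cov(Y_i,Y_j) − Σ_i Σ_{j: g(j)=g(i), t(j)=t(i)} Cov(Y_i,Y_j) + Σ_{m=1}^M ω(m,M)(Σ_{t=1}^{T−m} Cov(y_t, y_{t+m}) + Σ_{t=1}^{T−m} Cov(y_{t+m}, y_t)). -/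

import Mathlib

/-!
Writing `E[X Y'] = Cov(X, Y) + E[X] E[Y]'`, the group and time parts of `V_con - V_adj` become
`∑_c (∑_{i ∈ c} E[Y_i]) (∑_{i ∈ c} E[Y_i])'`, and the cell correction is
`∑_{cells} Cov(∑_{i ∈ cell} Y_i, ∑_{i ∈ cell} Y_i)`; all of these are positive semidefinite.
In the lag-`m` kernel term every `E[y_τ y_τ']` of `2 ∑_τ E[y_τ y_τ']` is used at most twice by the
pairs `(τ, τ + m)`, and for each pair
`E[y_τ] E[y_{τ+m}]' + E[y_{τ+m}] E[y_τ]' + E[y_τ y_τ'] + E[y_{τ+m} y_{τ+m}']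
  = Cov(y_τ, y_τ) + Cov(y_{τ+m}, y_{τ+m}) + (E[y_τ] + E[y_{τ+m}]) (E[y_τ] + E[y_{τ+m}])'`.
-/

open MeasureTheory

/-- Uncentered second moment matrix `E[X Y']` of two random vectors. -/
noncomputable def m2Mat {Ω : Type*} [MeasurableSpace Ω] (μ : Measure Ω) {v : ℕ}
    (X Y : Ω → Fin v → ℝ) : Matrix (Fin v) (Fin v) ℝ :=
  Matrix.of fun a b => ∫ ω, X ω a * Y ω b ∂μ

/-- Covariance matrix `Cov(X, Y) = E[(X - EX)(Y - EY)']` of two random vectors. -/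
noncomputable def covMat {Ω : Type*} [MeasurableSpace Ω] (μ : Measure Ω) {v : ℕ}
    (X Y : Ω → Fin v → ℝ) : Matrix (Fin v) (Fin v) ℝ :=
  Matrix.of fun a b =>
    ∫ ω, (X ω a - ∫ x, X x a ∂μ) * (Y ω b - ∫ x, Y x b ∂μ) ∂μ

/-- Time aggregate `y_τ := ∑_{i : t(i) = τ} Y_i`. -/
noncomputable def timeAgg {Ω : Type*} {n v : ℕ} (Y : Fin n → Ω → Fin v → ℝ)
    (tA : Fin n → ℕ) (τ : ℕ) : Ω → Fin v → ℝ :=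
  fun ω a => ∑ i ∈ Finset.univ.filter (fun i => tA i = τ), Y i ω a

open Matrix ProbabilityTheory Finset
open scoped MatrixOrder

def MemL2Vec {Ω : Type*} [MeasurableSpace Ω] (μ : Measure Ω) {v : ℕ} (X : Ω → Fin v → ℝ) :
    Prop :=
  ∀ a, MemLp (fun ω => X ω a) 2 μ

section Moments

variable {Ω : Type*} [MeasurableSpace Ω] {μ : Measure Ω} {v : ℕ}

lemma MemL2Vec.finset_sum {ι : Type*} {s : Finset ι} {X : ι → Ω → Fin v → ℝ}
    (hX : ∀ i ∈ s, MemL2Vec μ (X i)) : MemL2Vec μ (fun ω a => ∑ i ∈ s, X i ω a) :=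
  fun a => memLp_finsetSum s fun i hi => hX i hi a

lemma integral_apply_of_memL2Vec [IsFiniteMeasure μ] {X : Ω → Fin v → ℝ} (hX : MemL2Vec μ X)
    (a : Fin v) : μ[X] a = ∫ ω, X ω a ∂μ :=
  eval_integral (fun a => (hX a).integrable one_le_two) a

lemma covMat_apply (X Y : Ω → Fin v → ℝ) (a b : Fin v) :
    covMat μ X Y a b = cov[fun ω => X ω a, fun ω => Y ω b; μ] := rfl

lemma m2Mat_eq_covMat_add_vecMulVec [IsProbabilityMeasure μ] {X Y : Ω → Fin v → ℝ}
    (hX : MemL2Vec μ X) (hY : MemL2Vec μ Y) :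
    m2Mat μ X Y = covMat μ X Y + vecMulVec μ[X] μ[Y] := by
  ext a b
  rw [Matrix.add_apply, covMat_apply, covariance_eq_sub (hX a) (hY b), vecMulVec_apply,
    integral_apply_of_memL2Vec hX, integral_apply_of_memL2Vec hY, sub_add_cancel]
  rfl

lemma covMat_sum_sum [IsFiniteMeasure μ] {ι κ : Type*} (s : Finset ι) (t : Finset κ)
    {X : ι → Ω → Fin v → ℝ} {Z : κ → Ω → Fin v → ℝ}
    (hX : ∀ i ∈ s, MemL2Vec μ (X i)) (hZ : ∀ j ∈ t, MemL2Vec μ (Z j)) :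
    covMat μ (fun ω a => ∑ i ∈ s, X i ω a) (fun ω a => ∑ j ∈ t, Z j ω a)
      = ∑ i ∈ s, ∑ j ∈ t, covMat μ (X i) (Z j) := by
  ext a b
  simp only [covMat_apply, Matrix.sum_apply]
  exact covariance_fun_sum_fun_sum' (fun i hi => hX i hi a) (fun j hj => hZ j hj b)

lemma posSemidef_covMat_self [IsFiniteMeasure μ] {X : Ω → Fin v → ℝ} (hX : MemL2Vec μ X) :
    (covMat μ X X).PosSemidef := by
  refine PosSemidef.of_dotProduct_mulVec_nonneg ?_ fun x => ?_
  · ext a b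
    exact covariance_comm _ _
  · have hquad : star x ⬝ᵥ covMat μ X X *ᵥ x
        = cov[fun ω => ∑ a, x a * X ω a, fun ω => ∑ b, x b * X ω b; μ] := by
      rw [covariance_fun_sum_fun_sum' (fun a _ => (hX a).const_mul (x a))
        (fun b _ => (hX b).const_mul (x b))]
      simp only [covariance_const_mul_left, covariance_const_mul_right, dotProduct, mulVec,
        covMat_apply, Pi.star_apply, star_trivial, Finset.mul_sum]
      exact sum_congr rfl fun a _ => sum_congr rfl fun b _ => by ring
    rw [hquad]
    exact integral_nonneg fun ω => mul_self_nonneg _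

end Moments

lemma posSemidef_vecMulVec_self {n : Type*} [Finite n] (u : n → ℝ) :
    (vecMulVec u u).PosSemidef := by
  simpa using posSemidef_vecMulVec_self_star u

lemma vecMulVec_sum_sum {ι κ m n R : Type*} [NonUnitalNonAssocSemiring R] (s : Finset ι)
    (t : Finset κ) (u : ι → m → R) (w : κ → n → R) :
    vecMulVec (∑ i ∈ s, u i) (∑ j ∈ t, w j) = ∑ i ∈ s, ∑ j ∈ t, vecMulVec (u i) (w j) := by
  ext a b
  simp only [vecMulVec_apply, Matrix.sum_apply, Finset.sum_apply, Finset.sum_mul_sum]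

lemma posSemidef_sum_sum_fiber {ι α n R : Type*} [Fintype ι] [DecidableEq α] [Ring R]
    [PartialOrder R] [StarRing R] [AddLeftMono R] (k : ι → α) (B : ι → ι → Matrix n n R)
    (hB : ∀ s : Finset ι, (∑ i ∈ s, ∑ j ∈ s, B i j).PosSemidef) :
    (∑ i, ∑ j ∈ univ.filter (fun j => k j = k i), B i j).PosSemidef := by
  rw [← sum_fiberwise_of_maps_to (t := univ.image k) fun i _ => mem_image_of_mem k (mem_univ i)]
  refine posSemidef_sum _ fun c _ => ?_
  convert hB (univ.filter fun i => k i = c) using 2 with i hi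
  rw [(mem_filter.mp hi).2]

section Cluster

variable {Ω : Type*} [MeasurableSpace Ω] {μ : Measure Ω} {v : ℕ}

lemma posSemidef_m2Mat_self [IsProbabilityMeasure μ] {X : Ω → Fin v → ℝ} (hX : MemL2Vec μ X) :
    (m2Mat μ X X).PosSemidef := by
  rw [m2Mat_eq_covMat_add_vecMulVec hX hX]
  exact (posSemidef_covMat_self hX).add (posSemidef_vecMulVec_self _)

lemma posSemidef_sum_sum_fiber_covMat [IsFiniteMeasure μ] {ι α : Type*} [Fintype ι]
    [DecidableEq α] (k : ι → α) {X : ι → Ω → Fin v → ℝ} (hX : ∀ i, MemL2Vec μ (X i)) :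
    (∑ i, ∑ j ∈ univ.filter (fun j => k j = k i), covMat μ (X i) (X j)).PosSemidef :=
  posSemidef_sum_sum_fiber k _ fun s => covMat_sum_sum s s (fun i _ => hX i) (fun j _ => hX j) ▸
    posSemidef_covMat_self (MemL2Vec.finset_sum fun i _ => hX i)

lemma posSemidef_sum_sum_fiber_m2Mat_sub_covMat [IsProbabilityMeasure μ] {ι α : Type*}
    [Fintype ι] [DecidableEq α] (k : ι → α) {X : ι → Ω → Fin v → ℝ}
    (hX : ∀ i, MemL2Vec μ (X i)) :
    ((∑ i, ∑ j ∈ univ.filter (fun j => k j = k i), m2Mat μ (X i) (X j))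
      - ∑ i, ∑ j ∈ univ.filter (fun j => k j = k i), covMat μ (X i) (X j)).PosSemidef := by
  simp only [m2Mat_eq_covMat_add_vecMulVec, hX, sum_add_distrib, add_sub_cancel_left]
  exact posSemidef_sum_sum_fiber k _ fun s =>
    vecMulVec_sum_sum s s (fun i => μ[X i]) (fun j => μ[X j]) ▸ posSemidef_vecMulVec_self _

end Cluster

lemma sum_add_sum_shift_le_two_nsmul_sum {n 𝕜 : Type*} [RCLike 𝕜] {f : ℕ → Matrix n n 𝕜}
    (hf : ∀ τ, 0 ≤ f τ) (T m : ℕ) :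
    ∑ τ ∈ Icc 1 (T - m), (f τ + f (τ + m)) ≤ 2 • ∑ τ ∈ Icc 1 T, f τ := by
  rw [sum_add_distrib, two_nsmul]
  refine add_le_add (sum_le_sum_of_subset_of_nonneg (Icc_subset_Icc_right (Nat.sub_le T m))
    fun τ _ _ => hf τ) ?_
  refine (sum_map (Icc 1 (T - m)) (addRightEmbedding m) f).symm.trans_le <|
    sum_le_sum_of_subset_of_nonneg (fun σ hσ => ?_) fun τ _ _ => hf τ
  obtain ⟨τ, hτ, rfl⟩ := mem_map.mp hσ
  simp only [mem_Icc, addRightEmbedding_apply] at hτ ⊢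
  omega

section Kernel

variable {Ω : Type*} [MeasurableSpace Ω] {μ : Measure Ω} [IsProbabilityMeasure μ] {v : ℕ}

lemma posSemidef_vecMulVec_add_vecMulVec_add_m2Mat {X Z : Ω → Fin v → ℝ} (hX : MemL2Vec μ X)
    (hZ : MemL2Vec μ Z) :
    (vecMulVec μ[X] μ[Z] + vecMulVec μ[Z] μ[X] + (m2Mat μ X X + m2Mat μ Z Z)).PosSemidef := by
  have hsplit : vecMulVec μ[X] μ[Z] + vecMulVec μ[Z] μ[X] + (m2Mat μ X X + m2Mat μ Z Z)
      = covMat μ X X + covMat μ Z Z + vecMulVec (μ[X] + μ[Z]) (μ[X] + μ[Z]) := by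
    rw [m2Mat_eq_covMat_add_vecMulVec hX hX, m2Mat_eq_covMat_add_vecMulVec hZ hZ,
      add_vecMulVec, vecMulVec_add, vecMulVec_add]
    abel
  rw [hsplit]
  exact ((posSemidef_covMat_self hX).add (posSemidef_covMat_self hZ)).add
    (posSemidef_vecMulVec_self _)

lemma posSemidef_lag_m2Mat_sub_covMat (y : ℕ → Ω → Fin v → ℝ) (hy : ∀ τ, MemL2Vec μ (y τ))
    (T m : ℕ) :
    ((∑ τ ∈ Icc 1 (T - m), m2Mat μ (y τ) (y (τ + m)))
      + (∑ τ ∈ Icc 1 (T - m), m2Mat μ (y (τ + m)) (y τ))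
      + 2 • ∑ τ ∈ Icc 1 T, m2Mat μ (y τ) (y τ)
      - ((∑ τ ∈ Icc 1 (T - m), covMat μ (y τ) (y (τ + m)))
        + (∑ τ ∈ Icc 1 (T - m), covMat μ (y (τ + m)) (y τ)))).PosSemidef := by
  set S : ℕ → Matrix (Fin v) (Fin v) ℝ := fun τ => m2Mat μ (y τ) (y τ)
  have hS : ∀ τ, 0 ≤ S τ := fun τ => (posSemidef_m2Mat_self (hy τ)).nonneg
  have hsplit : (∑ τ ∈ Icc 1 (T - m), m2Mat μ (y τ) (y (τ + m)))
      + (∑ τ ∈ Icc 1 (T - m), m2Mat μ (y (τ + m)) (y τ))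
      + 2 • ∑ τ ∈ Icc 1 T, S τ
      - ((∑ τ ∈ Icc 1 (T - m), covMat μ (y τ) (y (τ + m)))
        + (∑ τ ∈ Icc 1 (T - m), covMat μ (y (τ + m)) (y τ)))
      = ∑ τ ∈ Icc 1 (T - m), (vecMulVec μ[y τ] μ[y (τ + m)] + vecMulVec μ[y (τ + m)] μ[y τ]
          + (S τ + S (τ + m)))
        + (2 • ∑ τ ∈ Icc 1 T, S τ - ∑ τ ∈ Icc 1 (T - m), (S τ + S (τ + m))) := by
    simp only [m2Mat_eq_covMat_add_vecMulVec, hy, sum_add_distrib]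
    abel
  rw [hsplit]
  exact (posSemidef_sum _ fun τ _ => posSemidef_vecMulVec_add_vecMulVec_add_m2Mat (hy τ)
    (hy (τ + m))).add (sum_add_sum_shift_le_two_nsmul_sum hS T m)

end Kernel

theorem stmt_12_general {Ω : Type*} [MeasurableSpace Ω] (μ : Measure Ω) [IsProbabilityMeasure μ]
    (n G T M v : ℕ) (Y : Fin n → Ω → Fin v → ℝ)
    (hmem : ∀ i, ∀ a : Fin v, MemLp (fun ω => Y i ω a) 2 μ)
    (g : Fin n → Fin G) (tA : Fin n → ℕ)
    (κ : ℕ → ℝ) (hκ : ∀ m, 0 ≤ κ m) :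
    Matrix.PosSemidef
      -- V_con :
      (((∑ i, ∑ j ∈ Finset.univ.filter (fun j => g j = g i), m2Mat μ (Y i) (Y j))
        + (∑ i, ∑ j ∈ Finset.univ.filter (fun j => tA j = tA i), m2Mat μ (Y i) (Y j))
        + ∑ m ∈ Finset.Icc 1 M, κ m •
            ((∑ τ ∈ Finset.Icc 1 (T - m), m2Mat μ (timeAgg Y tA τ) (timeAgg Y tA (τ + m)))
              + (∑ τ ∈ Finset.Icc 1 (T - m), m2Mat μ (timeAgg Y tA (τ + m)) (timeAgg Y tA τ))
              + 2 • ∑ τ ∈ Finset.Icc 1 T, m2Mat μ (timeAgg Y tA τ) (timeAgg Y tA τ)))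
      -- minus V_adj :
      - ((∑ i, ∑ j ∈ Finset.univ.filter (fun j => g j = g i), covMat μ (Y i) (Y j))
        + (∑ i, ∑ j ∈ Finset.univ.filter (fun j => tA j = tA i), covMat μ (Y i) (Y j))
        - (∑ i, ∑ j ∈ Finset.univ.filter (fun j => g j = g i ∧ tA j = tA i),
            covMat μ (Y i) (Y j))
        + ∑ m ∈ Finset.Icc 1 M, κ m •
            ((∑ τ ∈ Finset.Icc 1 (T - m), covMat μ (timeAgg Y tA τ) (timeAgg Y tA (τ + m)))
              + (∑ τ ∈ Finset.Icc 1 (T - m),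
                  covMat μ (timeAgg Y tA (τ + m)) (timeAgg Y tA τ))))) := by
  have hy : ∀ τ, MemL2Vec μ (timeAgg Y tA τ) := fun τ => MemL2Vec.finset_sum fun i _ => hmem i
  have hcell := posSemidef_sum_sum_fiber_covMat (fun i => (g i, tA i)) hmem
  simp only [Prod.mk.injEq] at hcell
  rw [show ∀ A₁ A₂ K B₁ B₂ B₃ L : Matrix (Fin v) (Fin v) ℝ,
      A₁ + A₂ + K - (B₁ + B₂ - B₃ + L) = (A₁ - B₁) + (A₂ - B₂) + B₃ + (K - L) from
    fun _ _ _ _ _ _ _ => by abel]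
  refine (((posSemidef_sum_sum_fiber_m2Mat_sub_covMat g hmem).add
    (posSemidef_sum_sum_fiber_m2Mat_sub_covMat tA hmem)).add hcell).add ?_
  rw [← sum_sub_distrib]
  refine posSemidef_sum _ fun m _ => ?_
  rw [← smul_sub]
  exact (posSemidef_lag_m2Mat_sub_covMat _ hy T m).smul (hκ m)

theorem stmt_12 {Ω : Type*} [MeasurableSpace Ω] (μ : Measure Ω) [IsProbabilityMeasure μ]
    (n G T M v : ℕ) (hM : M ≤ T - 1) (Y : Fin n → Ω → Fin v → ℝ)
    (hmem : ∀ i, ∀ a : Fin v, MemLp (fun ω => Y i ω a) 2 μ)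
    (g : Fin n → Fin G) (tA : Fin n → ℕ) (htA : ∀ i, tA i ∈ Finset.Icc 1 T)
    (κ : ℕ → ℝ) (hκ : ∀ m, 0 ≤ κ m) :
    Matrix.PosSemidef
      -- V_con :
      (((∑ i, ∑ j ∈ Finset.univ.filter (fun j => g j = g i), m2Mat μ (Y i) (Y j))
        + (∑ i, ∑ j ∈ Finset.univ.filter (fun j => tA j = tA i), m2Mat μ (Y i) (Y j))
        + ∑ m ∈ Finset.Icc 1 M, κ m •
            ((∑ τ ∈ Finset.Icc 1 (T - m), m2Mat μ (timeAgg Y tA τ) (timeAgg Y tA (τ + m)))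
              + (∑ τ ∈ Finset.Icc 1 (T - m), m2Mat μ (timeAgg Y tA (τ + m)) (timeAgg Y tA τ))
              + 2 • ∑ τ ∈ Finset.Icc 1 T, m2Mat μ (timeAgg Y tA τ) (timeAgg Y tA τ)))
      -- minus V_adj :
      - ((∑ i, ∑ j ∈ Finset.univ.filter (fun j => g j = g i), covMat μ (Y i) (Y j))
        + (∑ i, ∑ j ∈ Finset.univ.filter (fun j => tA j = tA i), covMat μ (Y i) (Y j))
        - (∑ i, ∑ j ∈ Finset.univ.filter (fun j => g j = g i ∧ tA j = tA i),
            covMat μ (Y i) (Y j))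
        + ∑ m ∈ Finset.Icc 1 M, κ m •
            ((∑ τ ∈ Finset.Icc 1 (T - m), covMat μ (timeAgg Y tA τ) (timeAgg Y tA (τ + m)))
              + (∑ τ ∈ Finset.Icc 1 (T - m),
                  covMat μ (timeAgg Y tA (τ + m)) (timeAgg Y tA τ))))) :=
  stmt_12_general μ n G T M v Y hmem g tA κ hκ
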